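/- Let K = 2 and assume for each k ∈ {1,2} that either (a_{k0} > 1 and a_{k1} > 1) or (min(a_{k0}, a_{k1}) = 0 and max(a_{k0}, a_{k1}) = a_{k•} > 1). Then the intercept-unpenalized LOOCV squared prediction error satisfies P̃E(0) ≤ P̃E(λ) for all λ ≥ 0 if and only if min(a_{k0}, a_{k1}) = 0 and a_{k•} > 1 for both k = 1 and k = 2; i.e. P̃E is minimized at λ = 0 if and only if there is complete separation in the data. -/

import Mathlib

/-- Denominator of the intercept-unpenalized leave-one-out ridge estimates for category
`k` (with `j` the other index): `(a_{k•} − 1) a_{j•} + 4λ(n − 1)`. -/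
noncomputable def tildeDen (a0 a1 : Fin 2 → ℕ) (k j : Fin 2) (l : ℝ) : ℝ :=
  ((a0 k : ℝ) + (a1 k : ℝ) - 1) * ((a0 j : ℝ) + (a1 j : ℝ)) +
    4 * l * ((a0 0 : ℝ) + (a1 0 : ℝ) + (a0 1 : ℝ) + (a1 1 : ℝ) - 1)

/-- Intercept-unpenalized leave-one-out estimate
`π̃_{k0}(λ) = (a_{k1} a_{j•} + 4λ a_{•1}) / ((a_{k•} − 1) a_{j•} + 4λ(n − 1))`. -/
noncomputable def tildePi0 (a0 a1 : Fin 2 → ℕ) (k j : Fin 2) (l : ℝ) : ℝ :=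
  ((a1 k : ℝ) * ((a0 j : ℝ) + (a1 j : ℝ)) + 4 * l * ((a1 0 : ℝ) + (a1 1 : ℝ))) /
    tildeDen a0 a1 k j l

/-- Intercept-unpenalized leave-one-out estimate
`π̃_{k1}(λ) = ((a_{k1} − 1) a_{j•} + 4λ(a_{•1} − 1)) / ((a_{k•} − 1) a_{j•} + 4λ(n − 1))`. -/
noncomputable def tildePi1 (a0 a1 : Fin 2 → ℕ) (k j : Fin 2) (l : ℝ) : ℝ :=
  (((a1 k : ℝ) - 1) * ((a0 j : ℝ) + (a1 j : ℝ)) +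
      4 * l * ((a1 0 : ℝ) + (a1 1 : ℝ) - 1)) / tildeDen a0 a1 k j l

/-- Intercept-unpenalized LOOCV deviance for `K = 2`; summands with a zero count
coefficient vanish (in Lean, `0 * log _ = 0`). -/
noncomputable def dTilde (a0 a1 : Fin 2 → ℕ) (l : ℝ) : ℝ :=
  -2 * (((a0 0 : ℝ) * Real.log (1 - tildePi0 a0 a1 0 1 l) +
          (a1 0 : ℝ) * Real.log (tildePi1 a0 a1 0 1 l)) +
        ((a0 1 : ℝ) * Real.log (1 - tildePi0 a0 a1 1 0 l) +
          (a1 1 : ℝ) * Real.log (tildePi1 a0 a1 1 0 l)))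

/-- Intercept-unpenalized LOOCV squared prediction error for `K = 2`. -/
noncomputable def peTilde (a0 a1 : Fin 2 → ℕ) (l : ℝ) : ℝ :=
  (1 / ((a0 0 : ℝ) + (a1 0 : ℝ) + (a0 1 : ℝ) + (a1 1 : ℝ))) *
    (((a0 0 : ℝ) * (tildePi0 a0 a1 0 1 l) ^ 2 +
        (a1 0 : ℝ) * (1 - tildePi1 a0 a1 0 1 l) ^ 2) +
     ((a0 1 : ℝ) * (tildePi0 a0 a1 1 0 l) ^ 2 +
        (a1 1 : ℝ) * (1 - tildePi1 a0 a1 1 0 l) ^ 2))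

/-!
Under complete separation every leave-one-out estimate at `λ = 0` predicts the left-out
observation exactly, so `P̃E(0) = 0 ≤ P̃E(λ)`. Otherwise some category contains both outcomes,
and the derivative of `P̃E` at `0`, namely `-(8/n) ∑_k a_{k0} a_{k1} / (a_{k•} - 1)³`, is
negative, so `P̃E` drops below `P̃E(0)` just to the right of `0`.
-/

open Set

lemma HasDerivAt.nonneg_of_forall_le {f : ℝ → ℝ} {f' a : ℝ} (hf : HasDerivAt f f' a)
    (hmin : ∀ x, a ≤ x → f a ≤ f x) : 0 ≤ f' := by
  have hloc : IsLocalMinOn f (Ici a) a :=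
    (show IsMinOn f (Ici a) a from fun x hx => hmin x hx).localize
  have hcone : (1 : ℝ) ∈ posTangentConeAt (Ici a) a :=
    mem_posTangentConeAt_of_segment_subset
      ((segment_subset_Icc (by simp)).trans Icc_subset_Ici_self)
  simpa using hloc.hasFDerivWithinAt_nonneg hf.hasDerivWithinAt.hasFDerivWithinAt hcone

lemma hasDerivAt_affine_div_affine_zero (A B C D : ℝ) (hC : C ≠ 0) :
    HasDerivAt (fun l : ℝ => (A + 4 * l * B) / (C + 4 * l * D))
      (4 * (B * C - A * D) / C ^ 2) 0 := by
  have hnum : HasDerivAt (fun l : ℝ => A + 4 * l * B) (4 * B) 0 := by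
    simpa using (((hasDerivAt_id (0 : ℝ)).const_mul 4).mul_const B).const_add A
  have hden : HasDerivAt (fun l : ℝ => C + 4 * l * D) (4 * D) 0 := by
    simpa using (((hasDerivAt_id (0 : ℝ)).const_mul 4).mul_const D).const_add C
  exact (hnum.div hden (by simpa using hC)).congr_deriv (by simp; ring)

-- `A, B, P, s, t` stand for `a_{k0}, a_{k1}, a_{j•}, a_{•1}, n - 1`.
lemma hasDerivAt_squared_error_zero (A B P s t : ℝ) (hA : A + B - 1 ≠ 0) (hP : P ≠ 0)
    (ht : t = A + B - 1 + P) :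
    HasDerivAt (fun l : ℝ =>
      A * ((B * P + 4 * l * s) / ((A + B - 1) * P + 4 * l * t)) ^ 2 +
        B * (1 - ((B - 1) * P + 4 * l * (s - 1)) / ((A + B - 1) * P + 4 * l * t)) ^ 2)
      (-(8 * (A * B / (A + B - 1) ^ 3))) 0 := by
  have hC : (A + B - 1) * P ≠ 0 := mul_ne_zero hA hP
  have h0 := hasDerivAt_affine_div_affine_zero (B * P) s _ t hC
  have h1 := hasDerivAt_affine_div_affine_zero ((B - 1) * P) (s - 1) _ t hC
  refine (((h0.pow 2).const_mul A).add (((h1.const_sub 1).pow 2).const_mul B)).congr_deriv ?_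
  subst ht
  simp only [mul_zero, zero_mul, add_zero, Nat.cast_ofNat, Nat.add_one_sub_one, pow_one]
  field_simp
  ring

noncomputable def categoryError (a0 a1 : Fin 2 → ℕ) (k j : Fin 2) (l : ℝ) : ℝ :=
  a0 k * tildePi0 a0 a1 k j l ^ 2 + a1 k * (1 - tildePi1 a0 a1 k j l) ^ 2

lemma peTilde_eq_categoryError (a0 a1 : Fin 2 → ℕ) (l : ℝ) :
    peTilde a0 a1 l = 1 / ((a0 0 : ℝ) + a1 0 + a0 1 + a1 1) *
      (categoryError a0 a1 0 1 l + categoryError a0 a1 1 0 l) := rfl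

lemma categoryError_nonneg (a0 a1 : Fin 2 → ℕ) (k j : Fin 2) (l : ℝ) :
    0 ≤ categoryError a0 a1 k j l := by
  unfold categoryError; positivity

lemma categoryError_zero_of_min_eq_zero {a0 a1 : Fin 2 → ℕ} {k j : Fin 2}
    (hmin : min (a0 k) (a1 k) = 0) (hk : 1 < a0 k + a1 k) (hj : 0 < a0 j + a1 j) :
    categoryError a0 a1 k j 0 = 0 := by
  rcases Nat.min_eq_zero_iff.mp hmin with h0 | h1
  · have hk' : (0 : ℝ) < a1 k - 1 := by
      have : (1 : ℝ) < a1 k := by exact_mod_cast (by omega : 1 < a1 k)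
      linarith
    have hj' : (0 : ℝ) < a0 j + a1 j := by exact_mod_cast hj
    have hpi : tildePi1 a0 a1 k j 0 = 1 := by
      simp only [tildePi1, tildeDen, h0, Nat.cast_zero, zero_add, mul_zero, zero_mul, add_zero]
      exact div_self (mul_pos hk' hj').ne'
    simp [categoryError, h0, hpi]
  · simp [categoryError, tildePi0, h1]

lemma hasDerivAt_categoryError {a0 a1 : Fin 2 → ℕ} {k j : Fin 2} (hkj : k ≠ j)
    (hk : 1 < a0 k + a1 k) (hj : 0 < a0 j + a1 j) :
    HasDerivAt (categoryError a0 a1 k j)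
      (-(8 * ((a0 k : ℝ) * a1 k / (a0 k + a1 k - 1) ^ 3))) 0 := by
  have hk' : (1 : ℝ) < a0 k + a1 k := by exact_mod_cast hk
  have hj' : (0 : ℝ) < a0 j + a1 j := by exact_mod_cast hj
  have hn : ((a0 0 : ℝ) + a1 0 + a0 1 + a1 1 - 1) = (a0 k + a1 k - 1) + (a0 j + a1 j) := by
    fin_cases k <;> fin_cases j <;> simp_all <;> ring
  unfold categoryError tildePi0 tildePi1 tildeDen
  exact hasDerivAt_squared_error_zero _ _ _ _ _ (by linarith) hj'.ne' hn

lemma hasDerivAt_peTilde {a0 a1 : Fin 2 → ℕ} (hsum : ∀ k, 1 < a0 k + a1 k) :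
    HasDerivAt (peTilde a0 a1)
      (-(8 / ((a0 0 : ℝ) + a1 0 + a0 1 + a1 1)) *
        ∑ k, (a0 k : ℝ) * a1 k / (a0 k + a1 k - 1) ^ 3) 0 := by
  have h0 := hasDerivAt_categoryError (a0 := a0) (a1 := a1) (k := 0) (j := 1) (by decide)
    (hsum 0) (by have := hsum 1; omega)
  have h1 := hasDerivAt_categoryError (a0 := a0) (a1 := a1) (k := 1) (j := 0) (by decide)
    (hsum 1) (by have := hsum 0; omega)
  simp_rw [funext (peTilde_eq_categoryError a0 a1)]
  exact ((h0.add h1).const_mul _).congr_deriv (by rw [Fin.sum_univ_two]; ring)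

lemma sum_div_pow_pos_of_min_ne_zero {a0 a1 : Fin 2 → ℕ} (hsum : ∀ k, 1 < a0 k + a1 k)
    {k : Fin 2} (hk : min (a0 k) (a1 k) ≠ 0) :
    0 < ∑ k, (a0 k : ℝ) * a1 k / (a0 k + a1 k - 1) ^ 3 := by
  have hden : ∀ i, (0 : ℝ) < a0 i + a1 i - 1 := fun i => by
    have : (1 : ℝ) < a0 i + a1 i := by exact_mod_cast hsum i
    linarith
  refine Finset.sum_pos' (fun i _ => div_nonneg (by positivity) (pow_pos (hden i) 3).le)
    ⟨k, Finset.mem_univ k, ?_⟩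
  have h0 : (0 : ℝ) < a0 k := by exact_mod_cast Nat.pos_of_ne_zero (by omega)
  have h1 : (0 : ℝ) < a1 k := by exact_mod_cast Nat.pos_of_ne_zero (by omega)
  exact div_pos (mul_pos h0 h1) (pow_pos (hden k) 3)

lemma peTilde_zero_of_separated {a0 a1 : Fin 2 → ℕ}
    (hsep : ∀ k, min (a0 k) (a1 k) = 0 ∧ 1 < a0 k + a1 k) : peTilde a0 a1 0 = 0 := by
  rw [peTilde_eq_categoryError,
    categoryError_zero_of_min_eq_zero (hsep 0).1 (hsep 0).2 (by have := (hsep 1).2; omega),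
    categoryError_zero_of_min_eq_zero (hsep 1).1 (hsep 1).2 (by have := (hsep 0).2; omega)]
  simp

lemma peTilde_nonneg (a0 a1 : Fin 2 → ℕ) (l : ℝ) : 0 ≤ peTilde a0 a1 l := by
  rw [peTilde_eq_categoryError]
  have := categoryError_nonneg a0 a1 0 1 l
  have := categoryError_nonneg a0 a1 1 0 l
  positivity

/-- `K = 2`, each category either has both counts `> 1` or is separated with `a_{k•} > 1`:
the intercept-unpenalized LOOCV squared prediction error is minimized at `λ = 0` if and
only if there is complete separation in the data. -/
theorem stmt19 (a0 a1 : Fin 2 → ℕ)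
    (h : ∀ k, (1 < a0 k ∧ 1 < a1 k) ∨
      (min (a0 k) (a1 k) = 0 ∧ max (a0 k) (a1 k) = a0 k + a1 k ∧ 1 < a0 k + a1 k)) :
    (∀ lam : ℝ, 0 ≤ lam → peTilde a0 a1 0 ≤ peTilde a0 a1 lam) ↔
      (∀ k, min (a0 k) (a1 k) = 0 ∧ 1 < a0 k + a1 k) := by
  have hsum : ∀ k, 1 < a0 k + a1 k := fun k => by
    rcases h k with ⟨_, _⟩ | ⟨_, _, _⟩ <;> omega
  constructor
  · intro hmin k
    refine ⟨?_, hsum k⟩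
    by_contra hk
    have hslope := (hasDerivAt_peTilde hsum).nonneg_of_forall_le hmin
    have hn : (0 : ℝ) < a0 0 + a1 0 + a0 1 + a1 1 := by
      exact_mod_cast (by have := hsum 0; omega : 0 < a0 0 + a1 0 + a0 1 + a1 1)
    have := mul_pos (div_pos (by norm_num : (0 : ℝ) < 8) hn)
      (sum_div_pow_pos_of_min_ne_zero hsum hk)
    linarith
  · intro hsep lam _
    exact (peTilde_zero_of_separated hsep).symm ▸ peTilde_nonneg a0 a1 lam
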